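/- arXiv:2104.05728 — 7 statements merged into one kernel-verified Lean document; each statement's English description precedes it below -/
import Mathlib

section
/- For d ≥ 2 and ℓ > 0, one has 1 < r* ≤ r⁺, where r* = (d+ℓ)/(ℓ+√d) and r⁺ = 1 + (d−1)/(1+√ℓ)², with equality r* = r⁺ if and only if ℓ = d. -/
/-- For d ≥ 2 and ℓ > 0, one has 1 < r* ≤ r⁺, where r* = (d+ℓ)/(ℓ+√d) and
r⁺ = 1 + (d−1)/(1+√ℓ)², with equality r* = r⁺ iff ℓ = d. -/
theorem stmt0 (d ℓ : ℝ) (hd : 2 ≤ d) (hℓ : 0 < ℓ) :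
    1 < (d + ℓ) / (ℓ + Real.sqrt d) ∧
    (d + ℓ) / (ℓ + Real.sqrt d) ≤ 1 + (d - 1) / (1 + Real.sqrt ℓ) ^ 2 ∧
    ((d + ℓ) / (ℓ + Real.sqrt d) = 1 + (d - 1) / (1 + Real.sqrt ℓ) ^ 2 ↔ ℓ = d) := by
  have hd0 : (0:ℝ) ≤ d := by linarith
  have hs2 : (Real.sqrt d) ^ 2 = d := Real.sq_sqrt hd0
  have ht2 : (Real.sqrt ℓ) ^ 2 = ℓ := Real.sq_sqrt hℓ.le
  set s := Real.sqrt d with hs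
  set t := Real.sqrt ℓ with ht
  have hs1 : 1 < s := by
    have : Real.sqrt 1 < Real.sqrt d := Real.sqrt_lt_sqrt (by norm_num) (by linarith)
    simpa using this
  have ht0 : 0 < t := Real.sqrt_pos.mpr hℓ
  have hA : 0 < ℓ + s := by linarith
  have hB : 0 < (1 + t) ^ 2 := by positivity
  have hback : ℓ = d → t = s := fun h => by rw [ht, hs, h]
  clear_value s t
  rw [show ℓ = t ^ 2 from ht2.symm] at hA
  rw [show d = s ^ 2 from hs2.symm, show ℓ = t ^ 2 from ht2.symm]
  refine ⟨?_, ?_, ?_, ?_⟩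
  · rw [one_lt_div hA]
    nlinarith
  · rw [div_le_iff₀ hA, ← sub_nonneg]
    have key : (1 + (s ^ 2 - 1) / (1 + t) ^ 2) * (t ^ 2 + s) - (s ^ 2 + t ^ 2)
        = (s - 1) * (s - t) ^ 2 / (1 + t) ^ 2 := by
      field_simp
      ring
    rw [key]
    apply div_nonneg _ hB.le
    exact mul_nonneg (by linarith) (sq_nonneg _)
  · intro h
    rw [div_eq_iff hA.ne'] at h
    have h2 : (s - 1) * (s - t) ^ 2 = 0 := by
      have h3 : ((1 + (s ^ 2 - 1) / (1 + t) ^ 2) * (t ^ 2 + s) - (s ^ 2 + t ^ 2))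
          * (1 + t) ^ 2 = 0 := by
        rw [← h]; ring
      have key : ((1 + (s ^ 2 - 1) / (1 + t) ^ 2) * (t ^ 2 + s) - (s ^ 2 + t ^ 2))
          * (1 + t) ^ 2 = (s - 1) * (s - t) ^ 2 := by
        field_simp
        ring
      linarith [key ▸ h3]
    have hst : s = t := by
      rcases mul_eq_zero.mp h2 with h | h
      · linarith
      · have := pow_eq_zero_iff (n := 2) (by norm_num) |>.mp h
        linarith
    rw [hst]
  · intro h
    have h2 : ℓ = d := by rw [← hs2, ← ht2, h]
    rw [hback h2]
    field_simp
    ring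
end

section
/- For d ≥ 2, ℓ > 0 and 1 < r < (d+ℓ)/(ℓ+√d), the quadratic equation (d−1)σ² − (d−1−(ℓ−1)(r−1))σ + (r−1) = 0 has two positive real roots. -/
/-!
With `a = d - 1`, `t = r - 1` and `b = a - (ℓ - 1) t`, the quadratic `a σ² - b σ + t` has two
positive roots as soon as `b > 2 √(a t)`. Writing `u = √a`, `v = √t`, `s = √ℓ`, one has
`b - 2 u v = (u - (1 + s) v) (u - (1 - s) v)`, so it suffices that `(1 + √ℓ)² t < a`. This follows
from the bound on `r`, which reads `t (ℓ + √d) < d - √d`, together with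
`(d - 1)(ℓ + √d) - (d - √d)(1 + √ℓ)² = (√d - 1)(√d - √ℓ)² ≥ 0`.
-/

open Real

theorem exists_two_pos_roots_of_two_sqrt_mul_lt {a b c : ℝ} (ha : 0 < a) (hc : 0 < c)
    (h : 2 * √a * √c < b) :
    ∃ x y : ℝ, x ≠ y ∧ 0 < x ∧ 0 < y ∧ a * x ^ 2 - b * x + c = 0 ∧ a * y ^ 2 - b * y + c = 0 := by
  have hb : 0 < b := lt_of_le_of_lt (by positivity) h
  have hdisc : 4 * a * c < b ^ 2 := by
    have : (2 * √a * √c) ^ 2 = 4 * a * c := by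
      rw [mul_pow, mul_pow, sq_sqrt ha.le, sq_sqrt hc.le]; ring
    nlinarith [show 0 < 2 * √a * √c by positivity]
  set s := √(b ^ 2 - 4 * a * c)
  have hs : s ^ 2 = b ^ 2 - 4 * a * c := sq_sqrt (by linarith)
  have hs0 : 0 < s := sqrt_pos.mpr (by linarith)
  have hsb : s < b := by nlinarith
  have hroot : ∀ x, 2 * a * x = b + s ∨ 2 * a * x = b - s → a * x ^ 2 - b * x + c = 0 := by
    rintro x (hx | hx) <;> refine mul_left_cancel₀ (by positivity : 4 * a ≠ 0) ?_
    · linear_combination (2 * a * x - b + s) * hx + hs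
    · linear_combination (2 * a * x - b - s) * hx + hs
  refine ⟨(b + s) / (2 * a), (b - s) / (2 * a), ?_, div_pos (by linarith) (by positivity),
    div_pos (by linarith) (by positivity), hroot _ (Or.inl (by field_simp)),
    hroot _ (Or.inr (by field_simp))⟩
  exact (div_lt_div_of_pos_right (by linarith) (by positivity)).ne'

theorem two_sqrt_mul_lt_of_one_add_sqrt_sq_mul_lt {a t ℓ : ℝ} (ht : 0 ≤ t) (hℓ : 0 ≤ ℓ)
    (h : (1 + √ℓ) ^ 2 * t < a) : 2 * √a * √t < a - (ℓ - 1) * t := by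
  have ha : 0 ≤ a := (by positivity : 0 ≤ (1 + √ℓ) ^ 2 * t).trans h.le
  obtain ⟨u, hu, rfl⟩ : ∃ u, 0 ≤ u ∧ a = u ^ 2 := ⟨√a, sqrt_nonneg a, (sq_sqrt ha).symm⟩
  obtain ⟨v, hv, rfl⟩ : ∃ v, 0 ≤ v ∧ t = v ^ 2 := ⟨√t, sqrt_nonneg t, (sq_sqrt ht).symm⟩
  obtain ⟨s, hs, rfl⟩ : ∃ s, 0 ≤ s ∧ ℓ = s ^ 2 := ⟨√ℓ, sqrt_nonneg ℓ, (sq_sqrt hℓ).symm⟩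
  rw [sqrt_sq hu, sqrt_sq hv, sqrt_sq hs] at *
  have hlt : (1 + s) * v < u := by
    refine (pow_lt_pow_iff_left₀ (by positivity) hu two_ne_zero).mp ?_
    linarith [mul_pow (1 + s) v 2]
  have hfactor : u ^ 2 - (s ^ 2 - 1) * v ^ 2 - 2 * u * v = (u - (1 + s) * v) * (u - (1 - s) * v) := by
    ring
  nlinarith [mul_pos (sub_pos.mpr hlt) (show 0 < u - (1 - s) * v by nlinarith)]

theorem sub_sqrt_mul_one_add_sqrt_sq_le {d ℓ : ℝ} (hd : 1 ≤ d) (hℓ : 0 ≤ ℓ) :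
    (d - √d) * (1 + √ℓ) ^ 2 ≤ (d - 1) * (ℓ + √d) := by
  obtain ⟨u, hu, rfl⟩ : ∃ u, 1 ≤ u ∧ d = u ^ 2 :=
    ⟨√d, one_le_sqrt.mpr hd, (sq_sqrt (zero_le_one.trans hd)).symm⟩
  obtain ⟨s, hs, rfl⟩ : ∃ s, 0 ≤ s ∧ ℓ = s ^ 2 := ⟨√ℓ, sqrt_nonneg ℓ, (sq_sqrt hℓ).symm⟩
  rw [sqrt_sq (zero_le_one.trans hu), sqrt_sq hs]
  nlinarith [mul_nonneg (sub_nonneg.mpr hu) (sq_nonneg (u - s))]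

theorem one_add_sqrt_sq_mul_sub_one_lt {d ℓ r : ℝ} (hd : 1 ≤ d) (hℓ : 0 ≤ ℓ)
    (hr : r < (d + ℓ) / (ℓ + √d)) : (1 + √ℓ) ^ 2 * (r - 1) < d - 1 := by
  have hpos : 0 < ℓ + √d := by linarith [one_le_sqrt.mpr hd]
  have hr' : (r - 1) * (ℓ + √d) < d - √d := by linarith [(lt_div_iff₀ hpos).mp hr]
  refine lt_of_mul_lt_mul_right ?_ hpos.le
  calc (1 + √ℓ) ^ 2 * (r - 1) * (ℓ + √d)
      < (d - √d) * (1 + √ℓ) ^ 2 := by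
        rw [mul_assoc, mul_comm]; exact mul_lt_mul_of_pos_right hr' (by positivity)
    _ ≤ (d - 1) * (ℓ + √d) := sub_sqrt_mul_one_add_sqrt_sq_le hd hℓ

/-- For d ≥ 2, ℓ > 0 and 1 < r < (d+ℓ)/(ℓ+√d), the quadratic equation
(d−1)σ² − (d−1−(ℓ−1)(r−1))σ + (r−1) = 0 has two positive real roots. -/
theorem stmt1 (d ℓ r : ℝ) (hd : 2 ≤ d) (hℓ : 0 < ℓ) (hr1 : 1 < r)
    (hr2 : r < (d + ℓ) / (ℓ + Real.sqrt d)) :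
    ∃ σ₃ σ₂ : ℝ, σ₃ ≠ σ₂ ∧ 0 < σ₃ ∧ 0 < σ₂ ∧
      (d - 1) * σ₃ ^ 2 - (d - 1 - (ℓ - 1) * (r - 1)) * σ₃ + (r - 1) = 0 ∧
      (d - 1) * σ₂ ^ 2 - (d - 1 - (ℓ - 1) * (r - 1)) * σ₂ + (r - 1) = 0 := by
  have hbound := one_add_sqrt_sq_mul_sub_one_lt (by linarith) hℓ.le hr2
  exact exists_two_pos_roots_of_two_sqrt_mul_lt (by linarith) (by linarith)
    (two_sqrt_mul_lt_of_one_add_sqrt_sq_mul_lt (by linarith) hℓ.le hbound)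
end

section
/- The pair (α, β) defined by α(Z) = −ℓ·ρ̂₀(Z) + Z·ρ̂₀'(Z), β(Z) = −û₀(Z) + Z·û₀'(Z) satisfies the linearized equations (Ω + ℓ(r−1) + û₀' + (d−1)û₀/Z)α + (Z+û₀)α' + ρ̂₀β' + (ρ̂₀' + (d−1)ρ̂₀/Z)β = 0 and (Ω + r − 1 + û₀')β + (Z+û₀)β' + (γ−1)ρ̂₀^{γ−2}α' + (γ−1)(γ−2)ρ̂₀^{γ−3}ρ̂₀'α = 0 with Ω = 0, whenever (ρ̂₀, û₀) is a smooth solution of the stationary self-similar system. -/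
/-- The scaling mode α = −ℓρ̂₀ + Zρ̂₀', β = −û₀ + Zû₀' solves the linearized
equations with Ω = 0 whenever (ρ̂₀, û₀) solves the stationary self-similar system. -/
theorem stmt6 (d r γ ℓ : ℝ) (hd : 2 ≤ d) (hr : 1 < r) (hγ : 1 < γ)
    (hℓ : ℓ = 2 / (γ - 1)) (ρ u : ℝ → ℝ)
    (hρs : ContDiffOn ℝ (⊤ : ℕ∞) ρ (Set.Ioi 0)) (hus : ContDiffOn ℝ (⊤ : ℕ∞) u (Set.Ioi 0))
    (hρpos : ∀ Z ∈ Set.Ioi (0 : ℝ), 0 < ρ Z)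
    (heq1 : ∀ Z ∈ Set.Ioi (0 : ℝ),
      ℓ * (r - 1) * ρ Z + Z * deriv ρ Z + deriv (fun W => ρ W * u W) Z
        + (d - 1) * ρ Z * u Z / Z = 0)
    (heq2 : ∀ Z ∈ Set.Ioi (0 : ℝ),
      (r - 1) * u Z + Z * deriv u Z + u Z * deriv u Z
        + deriv (fun W => ρ W ^ (γ - 1)) Z = 0)
    (α β : ℝ → ℝ)
    (hα : ∀ Z, α Z = -ℓ * ρ Z + Z * deriv ρ Z)
    (hβ : ∀ Z, β Z = -u Z + Z * deriv u Z) :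
    ∀ Z ∈ Set.Ioi (0 : ℝ),
      ((0 : ℝ) + ℓ * (r - 1) + deriv u Z + (d - 1) * u Z / Z) * α Z
          + (Z + u Z) * deriv α Z + ρ Z * deriv β Z
          + (deriv ρ Z + (d - 1) * ρ Z / Z) * β Z = 0 ∧
      ((0 : ℝ) + r - 1 + deriv u Z) * β Z + (Z + u Z) * deriv β Z
          + (γ - 1) * ρ Z ^ (γ - 2) * deriv α Z
          + (γ - 1) * (γ - 2) * ρ Z ^ (γ - 3) * deriv ρ Z * α Z = 0 := by
  have hρ1 : ContDiffOn ℝ (⊤ : ℕ∞) ρ (Set.Ioi 0) := hρs.of_le (by simp)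
  have hu1 : ContDiffOn ℝ (⊤ : ℕ∞) u (Set.Ioi 0) := hus.of_le (by simp)
  have hρ2 : ContDiffOn ℝ (⊤ : ℕ∞) (deriv ρ) (Set.Ioi 0) :=
    hρ1.deriv_of_isOpen isOpen_Ioi (le_refl _)
  have hu2 : ContDiffOn ℝ (⊤ : ℕ∞) (deriv u) (Set.Ioi 0) :=
    hu1.deriv_of_isOpen isOpen_Ioi (le_refl _)
  have hd' : ∀ (f : ℝ → ℝ), ContDiffOn ℝ (⊤ : ℕ∞) f (Set.Ioi 0) →
      ∀ W ∈ Set.Ioi (0:ℝ), HasDerivAt f (deriv f W) W := by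
    intro f hf W hW
    exact ((hf.contDiffAt (isOpen_Ioi.mem_nhds hW)).differentiableAt
      (by norm_num)).hasDerivAt
  -- rewritten equation 1 on Ioi 0
  have hF : ∀ W ∈ Set.Ioi (0:ℝ),
      ℓ * (r - 1) * ρ W + W * deriv ρ W
        + (deriv ρ W * u W + ρ W * deriv u W)
        + (d - 1) * ρ W * u W / W = 0 := by
    intro W hW
    have h1 := heq1 W hW
    have hmul : deriv (fun V => ρ V * u V) W
        = deriv ρ W * u W + ρ W * deriv u W :=
      ((hd' ρ hρ1 W hW).mul (hd' u hu1 W hW)).deriv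
    rw [hmul] at h1
    linarith
  -- rewritten equation 2 on Ioi 0
  have hG : ∀ W ∈ Set.Ioi (0:ℝ),
      (r - 1) * u W + W * deriv u W + u W * deriv u W
        + (γ - 1) * ρ W ^ (γ - 2) * deriv ρ W = 0 := by
    intro W hW
    have h2 := heq2 W hW
    have hpos := hρpos W hW
    have hpow : deriv (fun V => ρ V ^ (γ - 1)) W
        = (γ - 1) * ρ W ^ (γ - 2) * deriv ρ W := by
      have hder : HasDerivAt (fun V => ρ V ^ (γ - 1))
          (deriv ρ W * (γ - 1) * ρ W ^ (γ - 1 - 1)) W :=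
        (hd' ρ hρ1 W hW).rpow_const (Or.inl (ne_of_gt hpos))
      rw [hder.deriv, show γ - 1 - 1 = γ - 2 from by ring]; ring
    rw [hpow] at h2
    linarith
  intro Z hZ
  have hZpos : (0:ℝ) < Z := hZ
  have hZne : Z ≠ 0 := ne_of_gt hZpos
  have hρZ := hρpos Z hZ
  have hρZne : ρ Z ≠ 0 := ne_of_gt hρZ
  -- derivatives at Z
  have dρ : HasDerivAt ρ (deriv ρ Z) Z := hd' ρ hρ1 Z hZ
  have du : HasDerivAt u (deriv u Z) Z := hd' u hu1 Z hZ
  have dρ' : HasDerivAt (deriv ρ) (deriv (deriv ρ) Z) Z := hd' (deriv ρ) hρ2 Z hZ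
  have du' : HasDerivAt (deriv u) (deriv (deriv u) Z) Z := hd' (deriv u) hu2 Z hZ
  set a := ρ Z
  set b := u Z
  set a1 := deriv ρ Z
  set b1 := deriv u Z
  set a2 := deriv (deriv ρ) Z
  set b2 := deriv (deriv u) Z
  -- derivative of α and β
  have hαfun : α = fun W => -ℓ * ρ W + W * deriv ρ W := funext hα
  have hβfun : β = fun W => -u W + W * deriv u W := funext hβ
  have dα : HasDerivAt α (-ℓ * a1 + (1 * a1 + Z * a2)) Z := by
    rw [hαfun]
    exact ((dρ.const_mul (-ℓ)).add ((hasDerivAt_id Z).mul dρ'))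
  have dβ : HasDerivAt β (-b1 + (1 * b1 + Z * b2)) Z := by
    rw [hβfun]
    exact (du.neg.add ((hasDerivAt_id Z).mul du'))
  have hdαval : deriv α Z = -ℓ * a1 + (1 * a1 + Z * a2) := dα.deriv
  have hdβval : deriv β Z = -b1 + (1 * b1 + Z * b2) := dβ.deriv
  -- derivative of F at Z equals 0
  have dF : HasDerivAt (fun W => ℓ * (r - 1) * ρ W + W * deriv ρ W
      + (deriv ρ W * u W + ρ W * deriv u W) + (d - 1) * ρ W * u W / W)
      (ℓ * (r - 1) * a1 + (1 * a1 + Z * a2)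
        + ((a2 * b + a1 * b1) + (a1 * b1 + a * b2))
        + (((d - 1) * a1 * b + (d - 1) * a * b1) * Z - (d - 1) * a * b * 1) / Z ^ 2) Z := by
    exact (((dρ.const_mul (ℓ * (r - 1))).add ((hasDerivAt_id Z).mul dρ')).add
      ((dρ'.mul du).add (dρ.mul du'))).add
      ((((dρ.const_mul (d - 1)).mul du).div (hasDerivAt_id Z) hZne)
        )
  have hFzero : HasDerivAt (fun W => ℓ * (r - 1) * ρ W + W * deriv ρ W
      + (deriv ρ W * u W + ρ W * deriv u W) + (d - 1) * ρ W * u W / W)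
      0 Z := by
    have hev : (fun W => ℓ * (r - 1) * ρ W + W * deriv ρ W
        + (deriv ρ W * u W + ρ W * deriv u W) + (d - 1) * ρ W * u W / W)
        =ᶠ[nhds Z] (fun _ => (0:ℝ)) := by
      filter_upwards [isOpen_Ioi.mem_nhds hZ] with W hW using hF W hW
    exact (hasDerivAt_const Z (0:ℝ)).congr_of_eventuallyEq hev
  have hdF : ℓ * (r - 1) * a1 + (1 * a1 + Z * a2)
        + ((a2 * b + a1 * b1) + (a1 * b1 + a * b2))
        + (((d - 1) * a1 * b + (d - 1) * a * b1) * Z - (d - 1) * a * b * 1) / Z ^ 2 = 0 :=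
    dF.unique hFzero
  -- derivative of G at Z equals 0
  have dG : HasDerivAt (fun W => (r - 1) * u W + W * deriv u W + u W * deriv u W
      + (γ - 1) * ρ W ^ (γ - 2) * deriv ρ W)
      ((r - 1) * b1 + (1 * b1 + Z * b2) + (b1 * b1 + b * b2)
        + ((γ - 1) * (a1 * (γ - 2) * a ^ (γ - 2 - 1)) * a1
           + (γ - 1) * a ^ (γ - 2) * a2)) Z := by
    exact ((((du.const_mul (r - 1)).add ((hasDerivAt_id Z).mul du')).add
      (du.mul du')).add
      ((((dρ.rpow_const (Or.inl hρZne)).const_mul (γ - 1)).mul dρ')))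
  have hGzero : HasDerivAt (fun W => (r - 1) * u W + W * deriv u W + u W * deriv u W
      + (γ - 1) * ρ W ^ (γ - 2) * deriv ρ W) 0 Z := by
    have hev : (fun W => (r - 1) * u W + W * deriv u W + u W * deriv u W
        + (γ - 1) * ρ W ^ (γ - 2) * deriv ρ W) =ᶠ[nhds Z] (fun _ => (0:ℝ)) := by
      filter_upwards [isOpen_Ioi.mem_nhds hZ] with W hW using hG W hW
    exact (hasDerivAt_const Z (0:ℝ)).congr_of_eventuallyEq hev
  have hdG : (r - 1) * b1 + (1 * b1 + Z * b2) + (b1 * b1 + b * b2)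
        + ((γ - 1) * (a1 * (γ - 2) * a ^ (γ - 2 - 1)) * a1
           + (γ - 1) * a ^ (γ - 2) * a2) = 0 :=
    dG.unique hGzero
  -- values
  have hFval := hF Z hZ
  have hGval := hG Z hZ
  have hαval : α Z = -ℓ * a + Z * a1 := hα Z
  have hβval : β Z = -b + Z * b1 := hβ Z
  -- rpow exponent manipulations
  have hp32 : a ^ (γ - 2 - 1) = a ^ (γ - 3) := by
    rw [show γ - 2 - 1 = γ - 3 from by ring]
  have hp23 : a ^ (γ - 2) = a * a ^ (γ - 3) := by
    rw [show γ - 2 = 1 + (γ - 3) from by ring, Real.rpow_add hρZ, Real.rpow_one]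
  have hγne : γ - 1 ≠ 0 := by intro h; linarith
  have hℓγ : ℓ * (γ - 1) = 2 := by
    rw [hℓ]; field_simp
  rw [hp32] at hdG
  rw [hp23] at hdG hGval ⊢
  constructor
  · rw [hαval, hβval, hdαval, hdβval]
    field_simp at hFval hdF ⊢
    linear_combination hdF - ℓ * hFval
  · rw [hαval, hβval, hdαval, hdβval]
    linear_combination Z * hdG - hGval
      - (γ - 1) * a * (a ^ (γ - 3)) * a1 * hℓγ
end

section
/- The pair (α, β) defined by α(Z) = ℓ(r−1)·ρ̂₀(Z) + Z·ρ̂₀'(Z), β(Z) = (r−1)·û₀(Z) + Z·û₀'(Z) satisfies the linearized perturbation equations around (ρ̂₀, û₀) with exponent Ω = r, whenever (ρ̂₀, û₀) solves the stationary self-similar system. -/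
/-- The gauge mode α = ℓ(r−1)ρ̂₀ + Zρ̂₀', β = (r−1)û₀ + Zû₀' solves the linearized
equations with Ω = r whenever (ρ̂₀, û₀) solves the stationary self-similar system. -/
theorem stmt7 (d r γ ℓ : ℝ) (hd : 2 ≤ d) (hr : 1 < r) (hγ : 1 < γ)
    (hℓ : ℓ = 2 / (γ - 1)) (ρ u : ℝ → ℝ)
    (hρs : ContDiffOn ℝ (⊤ : ℕ∞) ρ (Set.Ioi 0)) (hus : ContDiffOn ℝ (⊤ : ℕ∞) u (Set.Ioi 0))
    (hρpos : ∀ Z ∈ Set.Ioi (0 : ℝ), 0 < ρ Z)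
    (heq1 : ∀ Z ∈ Set.Ioi (0 : ℝ),
      ℓ * (r - 1) * ρ Z + Z * deriv ρ Z + deriv (fun W => ρ W * u W) Z
        + (d - 1) * ρ Z * u Z / Z = 0)
    (heq2 : ∀ Z ∈ Set.Ioi (0 : ℝ),
      (r - 1) * u Z + Z * deriv u Z + u Z * deriv u Z
        + deriv (fun W => ρ W ^ (γ - 1)) Z = 0)
    (α β : ℝ → ℝ)
    (hα : ∀ Z, α Z = ℓ * (r - 1) * ρ Z + Z * deriv ρ Z)
    (hβ : ∀ Z, β Z = (r - 1) * u Z + Z * deriv u Z) :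
    ∀ Z ∈ Set.Ioi (0 : ℝ),
      (r + ℓ * (r - 1) + deriv u Z + (d - 1) * u Z / Z) * α Z
          + (Z + u Z) * deriv α Z + ρ Z * deriv β Z
          + (deriv ρ Z + (d - 1) * ρ Z / Z) * β Z = 0 ∧
      (r + r - 1 + deriv u Z) * β Z + (Z + u Z) * deriv β Z
          + (γ - 1) * ρ Z ^ (γ - 2) * deriv α Z
          + (γ - 1) * (γ - 2) * ρ Z ^ (γ - 3) * deriv ρ Z * α Z = 0 := by
  have hγ1 : γ - 1 ≠ 0 := ne_of_gt (by linarith)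
  have hl2 : ℓ * (γ - 1) = 2 := by rw [hℓ]; field_simp
  have hρ1 : ContDiffOn ℝ (⊤ : ℕ∞) (deriv ρ) (Set.Ioi 0) := hρs.deriv_of_isOpen isOpen_Ioi (by simp)
  have hu1 : ContDiffOn ℝ (⊤ : ℕ∞) (deriv u) (Set.Ioi 0) := hus.deriv_of_isOpen isOpen_Ioi (by simp)
  have dρW : ∀ W ∈ Set.Ioi (0:ℝ), DifferentiableAt ℝ ρ W := fun W hW =>
    (hρs.contDiffAt (isOpen_Ioi.mem_nhds hW)).differentiableAt (by simp)
  have duW : ∀ W ∈ Set.Ioi (0:ℝ), DifferentiableAt ℝ u W := fun W hW =>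
    (hus.contDiffAt (isOpen_Ioi.mem_nhds hW)).differentiableAt (by simp)
  -- the stationary equations with derivatives expanded
  have hF1 : ∀ W ∈ Set.Ioi (0:ℝ),
      ℓ * (r - 1) * ρ W + W * deriv ρ W
        + (deriv ρ W * u W + ρ W * deriv u W) + (d - 1) * ρ W * u W / W = 0 := by
    intro W hW
    have h := heq1 W hW
    rwa [deriv_fun_mul (dρW W hW) (duW W hW)] at h
  have hF2 : ∀ W ∈ Set.Ioi (0:ℝ),
      (r - 1) * u W + W * deriv u W + u W * deriv u W
        + (γ - 1) * ρ W ^ (γ - 2) * deriv ρ W = 0 := by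
    intro W hW
    have h := heq2 W hW
    have hdr := ((dρW W hW).hasDerivAt).rpow_const (p := γ - 1) (Or.inl (hρpos W hW).ne')
    rw [hdr.deriv, show γ - 1 - 1 = γ - 2 by ring] at h
    linear_combination h
  intro Z hZ
  have hZ0 : (0:ℝ) < Z := hZ
  have hZne : Z ≠ 0 := ne_of_gt hZ0
  have hmem : Set.Ioi (0:ℝ) ∈ nhds Z := isOpen_Ioi.mem_nhds hZ
  have hρZ : (0:ℝ) < ρ Z := hρpos Z hZ
  have hρZne : ρ Z ≠ 0 := hρZ.ne'
  have hdρ : HasDerivAt ρ (deriv ρ Z) Z := (dρW Z hZ).hasDerivAt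
  have hdu : HasDerivAt u (deriv u Z) Z := (duW Z hZ).hasDerivAt
  have hdρ1 : HasDerivAt (deriv ρ) (deriv (deriv ρ) Z) Z :=
    (((hρ1.contDiffAt hmem).differentiableAt (by simp))).hasDerivAt
  have hdu1 : HasDerivAt (deriv u) (deriv (deriv u) Z) Z :=
    (((hu1.contDiffAt hmem).differentiableAt (by simp))).hasDerivAt
  -- derivative of first stationary equation
  have h1 : HasDerivAt (fun W => ℓ * (r - 1) * ρ W) (ℓ * (r - 1) * deriv ρ Z) Z :=
    hdρ.const_mul _
  have h2 : HasDerivAt (fun W => W * deriv ρ W)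
      (1 * deriv ρ Z + Z * deriv (deriv ρ) Z) Z := (hasDerivAt_id Z).mul hdρ1
  have h3 : HasDerivAt (fun W => deriv ρ W * u W + ρ W * deriv u W)
      ((deriv (deriv ρ) Z * u Z + deriv ρ Z * deriv u Z)
        + (deriv ρ Z * deriv u Z + ρ Z * deriv (deriv u) Z)) Z :=
    (hdρ1.mul hdu).add (hdρ.mul hdu1)
  have h5 : HasDerivAt (fun W => (d - 1) * ρ W * u W / W)
      (((((d - 1) * deriv ρ Z) * u Z + ((d - 1) * ρ Z) * deriv u Z) * Z
        - (d - 1) * ρ Z * u Z * 1) / Z ^ 2) Z :=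
    ((hdρ.const_mul (d - 1)).mul hdu).div (hasDerivAt_id Z) hZne
  have hE1 := ((h1.add h2).add h3).add h5
  have hB : ℓ * (r - 1) * deriv ρ Z + (1 * deriv ρ Z + Z * deriv (deriv ρ) Z)
      + ((deriv (deriv ρ) Z * u Z + deriv ρ Z * deriv u Z)
        + (deriv ρ Z * deriv u Z + ρ Z * deriv (deriv u) Z))
      + (((((d - 1) * deriv ρ Z) * u Z + ((d - 1) * ρ Z) * deriv u Z) * Z
        - (d - 1) * ρ Z * u Z * 1) / Z ^ 2) = 0 := by
    rw [← hE1.deriv]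
    have hev : (fun W => ℓ * (r - 1) * ρ W + W * deriv ρ W
        + (deriv ρ W * u W + ρ W * deriv u W) + (d - 1) * ρ W * u W / W)
        =ᶠ[nhds Z] (fun _ => (0:ℝ)) := Filter.eventuallyEq_of_mem hmem hF1
    exact hev.deriv_eq.trans (deriv_const _ _)
  -- derivative of second stationary equation
  have hrpow2 : HasDerivAt (fun x => ρ x ^ (γ - 2))
      ((γ - 2) * ρ Z ^ (γ - 3) * deriv ρ Z) Z := by
    have h := hdρ.rpow_const (p := γ - 2) (Or.inl hρZne)
    convert h using 1
    rw [show γ - 2 - 1 = γ - 3 by ring]; ring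
  have g1 : HasDerivAt (fun W => (r - 1) * u W) ((r - 1) * deriv u Z) Z := hdu.const_mul _
  have g2 : HasDerivAt (fun W => W * deriv u W)
      (1 * deriv u Z + Z * deriv (deriv u) Z) Z := (hasDerivAt_id Z).mul hdu1
  have g3 : HasDerivAt (fun W => u W * deriv u W)
      (deriv u Z * deriv u Z + u Z * deriv (deriv u) Z) Z := hdu.mul hdu1
  have g4 : HasDerivAt (fun W => (γ - 1) * ρ W ^ (γ - 2) * deriv ρ W)
      (((γ - 1) * ((γ - 2) * ρ Z ^ (γ - 3) * deriv ρ Z)) * deriv ρ Z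
        + ((γ - 1) * ρ Z ^ (γ - 2)) * deriv (deriv ρ) Z) Z :=
    (hrpow2.const_mul (γ - 1)).mul hdρ1
  have hE2 := ((g1.add g2).add g3).add g4
  have hD : (r - 1) * deriv u Z + (1 * deriv u Z + Z * deriv (deriv u) Z)
      + (deriv u Z * deriv u Z + u Z * deriv (deriv u) Z)
      + (((γ - 1) * ((γ - 2) * ρ Z ^ (γ - 3) * deriv ρ Z)) * deriv ρ Z
        + ((γ - 1) * ρ Z ^ (γ - 2)) * deriv (deriv ρ) Z) = 0 := by
    rw [← hE2.deriv]
    have hev : (fun W => (r - 1) * u W + W * deriv u W + u W * deriv u W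
        + (γ - 1) * ρ W ^ (γ - 2) * deriv ρ W)
        =ᶠ[nhds Z] (fun _ => (0:ℝ)) := Filter.eventuallyEq_of_mem hmem hF2
    exact hev.deriv_eq.trans (deriv_const _ _)
  -- derivatives of α and β
  have hdα : HasDerivAt α (ℓ * (r - 1) * deriv ρ Z + (1 * deriv ρ Z + Z * deriv (deriv ρ) Z)) Z := by
    rw [show α = fun W => ℓ * (r - 1) * ρ W + W * deriv ρ W from funext hα]
    exact h1.add h2
  have hdβ : HasDerivAt β ((r - 1) * deriv u Z + (1 * deriv u Z + Z * deriv (deriv u) Z)) Z := by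
    rw [show β = fun W => (r - 1) * u W + W * deriv u W from funext hβ]
    exact g1.add g2
  have hA := hF1 Z hZ
  have hC := hF2 Z hZ
  have hpow : ρ Z ^ (γ - 2) = ρ Z ^ (γ - 3) * ρ Z := by
    rw [show γ - 2 = γ - 3 + 1 by ring, Real.rpow_add_one hρZne]
  rw [hα Z, hβ Z, hdα.deriv, hdβ.deriv]
  constructor
  · field_simp at hA hB ⊢
    linear_combination (r + ℓ * (r - 1)) * hA + hB
  · rw [hpow] at hC hD ⊢
    linear_combination (2 * r - 1) * hC + Z * hD
      + ((γ - 1) * (r - 1) * deriv ρ Z * ρ Z * ρ Z ^ (γ - 3)) * hl2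
end

section
/- At the point P₂ = (σ₂, 1−σ₂) with σ₂ a root of (d−1)σ² − (d−1−(ℓ−1)(r−1))σ + (r−1) = 0, all three quantities Δ, Δ₁, Δ₂ vanish: Δ(1−σ₂, σ₂) = 0, Δ₁(1−σ₂, σ₂) = 0, Δ₂(1−σ₂, σ₂) = 0. -/
/-- At P₂ = (σ₂, 1−σ₂), with σ₂ a root of the sonic-point quadratic, all three of
Δ, Δ₁, Δ₂ vanish. -/
theorem stmt15 (d ℓ r σ₂ : ℝ) (hd : 2 ≤ d) (hℓ : 0 < ℓ) (hr : 1 < r)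
    (hroot : (d - 1) * σ₂ ^ 2 - (d - 1 - (ℓ - 1) * (r - 1)) * σ₂ + (r - 1) = 0) :
    ((1 - σ₂) - 1) ^ 2 - σ₂ ^ 2 = 0 ∧
    (1 - σ₂) * ((1 - σ₂) - 1) * ((1 - σ₂) - r)
      - d * ((1 - σ₂) - ℓ / d * (r - 1)) * σ₂ ^ 2 = 0 ∧
    σ₂ / ℓ * ((ℓ + d - 1) * (1 - σ₂) ^ 2 - (ℓ + d + (ℓ - 1) * r) * (1 - σ₂)
      + ℓ * r - ℓ * σ₂ ^ 2) = 0 := by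
  have hd0 : d ≠ 0 := by linarith
  refine ⟨by ring, ?_, ?_⟩
  · field_simp
    linear_combination σ₂ * hroot
  · linear_combination (σ₂ / ℓ) * hroot
end

section
/- The point P₅ = (r√d/(ℓ+d), rℓ/(ℓ+d)) satisfies Δ₁(P₅) = 0 and Δ₂(P₅) = 0; moreover Δ(P₅) = 0 if and only if r = (d+ℓ)/(ℓ+√d) or r = (d+ℓ)/(ℓ−√d) (the latter requiring ℓ > √d). -/
/-- At P₅ = (r√d/(ℓ+d), rℓ/(ℓ+d)) one has Δ₁ = Δ₂ = 0, and Δ = 0 iff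
r = (d+ℓ)/(ℓ+√d) or (ℓ > √d and r = (d+ℓ)/(ℓ−√d)). -/
theorem stmt16 (d ℓ r : ℝ) (hd : 2 ≤ d) (hℓ : 0 < ℓ) (hr : 0 < r) :
    (r * ℓ / (ℓ + d)) * (r * ℓ / (ℓ + d) - 1) * (r * ℓ / (ℓ + d) - r)
        - d * (r * ℓ / (ℓ + d) - ℓ / d * (r - 1)) * (r * Real.sqrt d / (ℓ + d)) ^ 2 = 0 ∧
    (r * Real.sqrt d / (ℓ + d)) / ℓ *
        ((ℓ + d - 1) * (r * ℓ / (ℓ + d)) ^ 2 - (ℓ + d + (ℓ - 1) * r) * (r * ℓ / (ℓ + d))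
          + ℓ * r - ℓ * (r * Real.sqrt d / (ℓ + d)) ^ 2) = 0 ∧
    ((r * ℓ / (ℓ + d) - 1) ^ 2 - (r * Real.sqrt d / (ℓ + d)) ^ 2 = 0 ↔
      r = (d + ℓ) / (ℓ + Real.sqrt d) ∨
        (Real.sqrt d < ℓ ∧ r = (d + ℓ) / (ℓ - Real.sqrt d))) := by
  have hdpos : (0:ℝ) < d := by linarith
  set s := Real.sqrt d with hsdef
  have hs : 0 < s := Real.sqrt_pos.mpr hdpos
  have hs2 : s ^ 2 = d := Real.sq_sqrt hdpos.le
  have hld : (0:ℝ) < ℓ + d := by linarith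
  have hld' : ℓ + d ≠ 0 := hld.ne'
  refine ⟨?_, ?_, ?_⟩
  · rw [← hs2]
    have hls2 : ℓ + s ^ 2 ≠ 0 := by positivity
    field_simp
    ring
  · rw [← hs2]
    have hls2 : ℓ + s ^ 2 ≠ 0 := by positivity
    field_simp
    ring
  · constructor
    · intro h
      have key : (r * ℓ - (ℓ + d) - r * s) * (r * ℓ - (ℓ + d) + r * s) = 0 := by
        have h2 : (r * ℓ - (ℓ + d)) ^ 2 - (r * s) ^ 2 = 0 := by
          have := h
          field_simp at this
          nlinarith [this]
        nlinarith [h2]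
      rcases mul_eq_zero.mp key with h1 | h1
      · -- r(ℓ - s) = ℓ + d, need s < ℓ
        have hrls : r * (ℓ - s) = ℓ + d := by linarith
        have hls : 0 < ℓ - s := by
          rcases lt_trichotomy (ℓ - s) 0 with hc | hc | hc
          · nlinarith
          · nlinarith
          · exact hc
        right
        refine ⟨by linarith, ?_⟩
        field_simp
        linarith [hrls]
      · left
        have hrls : r * (ℓ + s) = ℓ + d := by linarith
        have hls : (0:ℝ) < ℓ + s := by linarith
        field_simp
        linarith [hrls]
    · rintro (h | ⟨hls, h⟩)
      · have hls : (0:ℝ) < ℓ + s := by linarith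
        have hrls : r * (ℓ + s) = d + ℓ := by
          rw [h]; field_simp
        field_simp
        linear_combination (r * ℓ - (ℓ + d) - r * s) * hrls
      · have hls' : (0:ℝ) < ℓ - s := by linarith
        have hrls : r * (ℓ - s) = d + ℓ := by
          rw [h]; field_simp
        field_simp
        linear_combination (r * ℓ - (ℓ + d) + r * s) * hrls
end

section
/- For d ≥ 2 and ℓ > 0, the discriminant of the quadratic (d−1)σ² − (d−1−(ℓ−1)(r−1))σ + (r−1) in σ, namely D(r) = (d−1−(ℓ−1)(r−1))² − 4(d−1)(r−1), is strictly positive for 1 < r < r* = (d+ℓ)/(ℓ+√d); hence the two roots σ₃ ≤ σ₂ are real and distinct (σ₃ < σ₂) in this range. -/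
/-! Writing `ℓ = L²`, the discriminant factors as
`(d - 1 - (r - 1)(L + 1)²) (d - 1 - (r - 1)(L - 1)²)`. The condition `r < r*` says
`(r - 1)(ℓ + √d) < √d (√d - 1)`, and AM-GM (`2 L √d ≤ ℓ + d`) upgrades this to
`(r - 1)(L + 1)² < d - 1`, so both factors are positive. -/

open Real

theorem exists_lt_roots_of_discrim_pos {a b c : ℝ} (ha : a ≠ 0) (hD : 0 < discrim a b c) :
    ∃ x y : ℝ, x < y ∧ a * (x * x) + b * x + c = 0 ∧ a * (y * y) + b * y + c = 0 := by
  set s := √(discrim a b c)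
  have hs : 0 < s := sqrt_pos.2 hD
  have hroot := quadratic_eq_zero_iff ha (mul_self_sqrt hD.le).symm
  have hx := (hroot ((-b + s) / (2 * a))).2 (Or.inl rfl)
  have hy := (hroot ((-b - s) / (2 * a))).2 (Or.inr rfl)
  have hne : (-b + s) / (2 * a) ≠ (-b - s) / (2 * a) := by
    rw [Ne, div_left_inj' (mul_ne_zero two_ne_zero ha)]
    linarith
  rcases hne.lt_or_gt with hlt | hgt
  · exact ⟨_, _, hlt, hx, hy⟩
  · exact ⟨_, _, hgt, hy, hx⟩

theorem sub_one_mul_sqrt_add_one_sq_lt {d ℓ r : ℝ} (hd : 0 ≤ d) (hℓ : 0 ≤ ℓ) (hr1 : 1 < r)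
    (hr2 : r < (d + ℓ) / (ℓ + √d)) :
    (r - 1) * (√ℓ + 1) ^ 2 < d - 1 := by
  set S := √d
  set L := √ℓ
  have hS : S ^ 2 = d := sq_sqrt hd
  have hL : L ^ 2 = ℓ := sq_sqrt hℓ
  have hS0 : 0 ≤ S := sqrt_nonneg d
  have hden : 0 < ℓ + S := by
    by_contra! h
    rw [div_eq_zero_iff.2 (Or.inr (by linarith))] at hr2
    linarith
  have hs : 0 < r - 1 := by linarith
  have hsmall : (r - 1) * (L ^ 2 + S) < S * (S - 1) := by
    rw [lt_div_iff₀ hden] at hr2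
    rw [hL]; nlinarith
  have hS1 : 1 < S := by nlinarith [mul_pos hs hden]
  -- `(d - 1)(ℓ + √d) - √d (√d - 1)(L + 1)² = (√d - 1)(√d - L)²`, which is AM-GM
  have hamgm : S * (S - 1) * (L + 1) ^ 2 ≤ (S ^ 2 - 1) * (L ^ 2 + S) := by
    nlinarith [mul_nonneg (sub_nonneg.2 hS1.le) (sq_nonneg (S - L))]
  have hpos : 0 < L ^ 2 + S := by rw [hL]; exact hden
  rw [← hS]
  refine lt_of_mul_lt_mul_right ?_ hpos.le
  calc (r - 1) * (L + 1) ^ 2 * (L ^ 2 + S) = (r - 1) * (L ^ 2 + S) * (L + 1) ^ 2 := by ring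
    _ < S * (S - 1) * (L + 1) ^ 2 := by gcongr
    _ ≤ (S ^ 2 - 1) * (L ^ 2 + S) := hamgm

theorem sonic_discriminant_pos {d ℓ r : ℝ} (hd : 0 ≤ d) (hℓ : 0 ≤ ℓ) (hr1 : 1 < r)
    (hr2 : r < (d + ℓ) / (ℓ + √d)) :
    0 < (d - 1 - (ℓ - 1) * (r - 1)) ^ 2 - 4 * (d - 1) * (r - 1) := by
  have hsq : √ℓ ^ 2 = ℓ := sq_sqrt hℓ
  have hfactor : (d - 1 - (ℓ - 1) * (r - 1)) ^ 2 - 4 * (d - 1) * (r - 1) =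
      (d - 1 - (r - 1) * (√ℓ + 1) ^ 2) * (d - 1 - (r - 1) * (√ℓ - 1) ^ 2) := by
    conv_lhs => rw [← hsq]
    ring
  have hupper := sub_one_mul_sqrt_add_one_sq_lt hd hℓ hr1 hr2
  have hlower : (r - 1) * (√ℓ - 1) ^ 2 ≤ (r - 1) * (√ℓ + 1) ^ 2 := by
    nlinarith [mul_nonneg (sub_pos.2 hr1).le (sqrt_nonneg ℓ)]
  rw [hfactor]
  exact mul_pos (by linarith) (by linarith)

/-- For d ≥ 2, ℓ > 0, 1 < r < r* = (d+ℓ)/(ℓ+√d), the discriminant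
D(r) = (d−1−(ℓ−1)(r−1))² − 4(d−1)(r−1) is strictly positive, and the quadratic
has two distinct real roots σ₃ < σ₂. -/
theorem stmt19 (d ℓ r : ℝ) (hd : 2 ≤ d) (hℓ : 0 < ℓ) (hr1 : 1 < r)
    (hr2 : r < (d + ℓ) / (ℓ + Real.sqrt d)) :
    0 < (d - 1 - (ℓ - 1) * (r - 1)) ^ 2 - 4 * (d - 1) * (r - 1) ∧
    ∃ σ₃ σ₂ : ℝ, σ₃ < σ₂ ∧
      (d - 1) * σ₃ ^ 2 - (d - 1 - (ℓ - 1) * (r - 1)) * σ₃ + (r - 1) = 0 ∧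
      (d - 1) * σ₂ ^ 2 - (d - 1 - (ℓ - 1) * (r - 1)) * σ₂ + (r - 1) = 0 := by
  have hD := sonic_discriminant_pos (by linarith) hℓ.le hr1 hr2
  obtain ⟨x, y, hxy, hx, hy⟩ := exists_lt_roots_of_discrim_pos
    (a := d - 1) (b := -(d - 1 - (ℓ - 1) * (r - 1))) (c := r - 1) (by linarith)
    (by rwa [discrim, neg_sq])
  exact ⟨hD, x, y, hxy, by linear_combination hx, by linear_combination hy⟩
end
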